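/- arXiv:2006.13155 — 2 statements merged into one kernel-verified Lean document; each statement's English description precedes it below -/
import Mathlib

section
/- Suppose β ≤ min{1, w₁, w₂, w₃}. Then the weighted Łukasiewicz conjunction is associative in the sense that ^β((^β(x₁^{w₁} ⊗ x₂^{w₂}))^{⊗1} ⊗ x₃^{w₃}) = ^β(x₁^{w₁} ⊗ (^β(x₂^{w₂} ⊗ x₃^{w₃}))^{⊗1}) for all x₁,x₂,x₃ ∈ [0,1]. -/
/-!
When `β ≤ 1` and the penalties `A = w₁ (1 - x₁)`, `B`, `C` are nonnegative, the upper clamp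
`min 1` never acts, so a conjunction is `max 0 (β - A - B)`. Plugged into a weight-`1` slot, its
truncation at `0` is absorbed by the outer clamp, because `β - 1 - C ≤ 0`. Hence both bracketings equal
`max 0 (2β - 1 - A - B - C)`, which is symmetric in the three penalties.
-/

/-- Binary weighted Łukasiewicz conjunction with bias `β` and weights `u, v`. -/
def wConj2 (β u v a b : ℝ) : ℝ := max 0 (min 1 (β - u * (1 - a) - v * (1 - b)))

lemma wConj2_comm (β u v a b : ℝ) : wConj2 β u v a b = wConj2 β v u b a := by
  rw [wConj2, wConj2, sub_right_comm]

lemma wConj2_of_le_one {β u v a b : ℝ} (hβ : β ≤ 1) (ha : 0 ≤ u * (1 - a))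
    (hb : 0 ≤ v * (1 - b)) : wConj2 β u v a b = max 0 (β - u * (1 - a) - v * (1 - b)) := by
  rw [wConj2, min_eq_right (by linarith)]

lemma max_zero_max_zero_add_of_nonpos {d : ℝ} (t : ℝ) (hd : d ≤ 0) :
    max 0 (max 0 t + d) = max 0 (t + d) := by
  rw [← max_add_add_right, zero_add, ← max_assoc, max_eq_left hd]

lemma wConj2_one_wConj2 {β u v w a b c : ℝ} (hβ : β ≤ 1) (ha : 0 ≤ u * (1 - a))
    (hb : 0 ≤ v * (1 - b)) (hc : 0 ≤ w * (1 - c)) :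
    wConj2 β 1 w (wConj2 β u v a b) c =
      max 0 (2 * β - 1 - u * (1 - a) - v * (1 - b) - w * (1 - c)) := by
  have hd : β - 1 - w * (1 - c) ≤ 0 := by linarith
  have hinner : 0 ≤ 1 * (1 - max 0 (β - u * (1 - a) - v * (1 - b))) := by
    rw [one_mul, sub_nonneg]
    exact max_le zero_le_one (by linarith)
  rw [wConj2_of_le_one hβ ha hb, wConj2_of_le_one hβ hinner hc]
  convert max_zero_max_zero_add_of_nonpos (β - u * (1 - a) - v * (1 - b)) hd using 2 <;> ring

theorem weighted_lukasiewicz_conj_assoc_general (β w1 w2 w3 x1 x2 x3 : ℝ)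
    (hw1 : 0 ≤ w1) (hw2 : 0 ≤ w2) (hw3 : 0 ≤ w3)
    (hβ1 : β ≤ 1)
    (hx1 : x1 ∈ Set.Icc (0:ℝ) 1) (hx2 : x2 ∈ Set.Icc (0:ℝ) 1)
    (hx3 : x3 ∈ Set.Icc (0:ℝ) 1) :
    wConj2 β 1 w3 (wConj2 β w1 w2 x1 x2) x3 =
      wConj2 β w1 1 x1 (wConj2 β w2 w3 x2 x3) := by
  have h1 : 0 ≤ w1 * (1 - x1) := mul_nonneg hw1 (sub_nonneg.2 hx1.2)
  have h2 : 0 ≤ w2 * (1 - x2) := mul_nonneg hw2 (sub_nonneg.2 hx2.2)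
  have h3 : 0 ≤ w3 * (1 - x3) := mul_nonneg hw3 (sub_nonneg.2 hx3.2)
  rw [wConj2_comm β w1 1, wConj2_one_wConj2 hβ1 h1 h2 h3, wConj2_one_wConj2 hβ1 h2 h3 h1]
  ring_nf

/-- If `β ≤ min {1, w₁, w₂, w₃}`, the weighted Łukasiewicz conjunction is associative. -/
theorem weighted_lukasiewicz_conj_assoc (β w1 w2 w3 x1 x2 x3 : ℝ)
    (hβ : 0 ≤ β) (hw1 : 0 ≤ w1) (hw2 : 0 ≤ w2) (hw3 : 0 ≤ w3)
    (hβ1 : β ≤ 1) (hβw1 : β ≤ w1) (hβw2 : β ≤ w2) (hβw3 : β ≤ w3)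
    (hx1 : x1 ∈ Set.Icc (0:ℝ) 1) (hx2 : x2 ∈ Set.Icc (0:ℝ) 1)
    (hx3 : x3 ∈ Set.Icc (0:ℝ) 1) :
    wConj2 β 1 w3 (wConj2 β w1 w2 x1 x2) x3 =
      wConj2 β w1 1 x1 (wConj2 β w2 w3 x2 x3) :=
  weighted_lukasiewicz_conj_assoc_general β w1 w2 w3 x1 x2 x3 hw1 hw2 hw3 hβ1 hx1 hx2 hx3
end

section
/- Given a threshold α with 1/2 < α ≤ 1 and parameters satisfying (i) α·wᵢ - β + 1 ≥ α for all i and (ii) Σᵢ (1-α)·wᵢ - β + 1 ≤ 1 - α, the weighted Łukasiewicz disjunction ⊕^β(x₁^{w₁},...,xₙ^{wₙ}) = max(0, min(1, 1 - β + Σᵢ wᵢxᵢ)) returns a value ≥ α whenever some input xⱼ ≥ α (with all other inputs ≥ 0), and returns a value ≤ 1-α whenever all inputs xᵢ ≤ 1-α. -/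
section OrderedSemiring

variable {ι R : Type*} [Fintype ι] [Semiring R] [PartialOrder R] [IsOrderedRing R]

theorem mul_le_sum_mul_of_le {w x : ι → R} {a : R} (hw : ∀ i, 0 ≤ w i) (hx : ∀ i, 0 ≤ x i)
    {j : ι} (hj : a ≤ x j) : w j * a ≤ ∑ i, w i * x i :=
  calc w j * a ≤ w j * x j := mul_le_mul_of_nonneg_left hj (hw j)
    _ ≤ ∑ i, w i * x i :=
      Finset.single_le_sum (fun i _ => mul_nonneg (hw i) (hx i)) (Finset.mem_univ j)

theorem sum_mul_le_sum_mul_of_le {w x : ι → R} {c : R} (hw : ∀ i, 0 ≤ w i) (hx : ∀ i, x i ≤ c) :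
    ∑ i, w i * x i ≤ ∑ i, w i * c :=
  Finset.sum_le_sum fun i _ => mul_le_mul_of_nonneg_left (hx i) (hw i)

end OrderedSemiring

section Clamp

variable {R : Type*} [LinearOrder R] [Zero R] [One R] {a t : R}

theorem le_max_zero_min_one (ha : a ≤ 1) (ht : a ≤ t) : a ≤ max 0 (min 1 t) :=
  le_max_of_le_right (le_min ha ht)

theorem max_zero_min_one_le (ha : 0 ≤ a) (ht : t ≤ a) : max 0 (min 1 t) ≤ a :=
  max_le ha ((min_le_right _ _).trans ht)

end Clamp

theorem weighted_lukasiewicz_disj_classical_constraints_general (n : ℕ) (w : Fin n → ℝ) (β α : ℝ)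
    (hw : ∀ i, 0 ≤ w i) (hα2 : α ≤ 1)
    (hconstr1 : ∀ i, α * w i - β + 1 ≥ α)
    (hconstr2 : (∑ i, (1 - α) * w i) - β + 1 ≤ 1 - α) :
    (∀ x : Fin n → ℝ, (∀ i, 0 ≤ x i ∧ x i ≤ 1) → (∃ j, α ≤ x j) →
      α ≤ max 0 (min 1 (1 - β + ∑ i, w i * x i))) ∧
    (∀ x : Fin n → ℝ, (∀ i, 0 ≤ x i ∧ x i ≤ 1) → (∀ i, x i ≤ 1 - α) →
      max 0 (min 1 (1 - β + ∑ i, w i * x i)) ≤ 1 - α) := by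
  constructor
  · rintro x hx ⟨j, hj⟩
    have hsum := mul_le_sum_mul_of_le hw (fun i => (hx i).1) hj
    have := hconstr1 j
    exact le_max_zero_min_one hα2 (by linarith)
  · intro x _ hle
    have hsum := sum_mul_le_sum_mul_of_le hw hle
    simp only [mul_comm (1 - α)] at hconstr2
    exact max_zero_min_one_le (by linarith) (by linarith)

/-- Under the classicality constraints, the weighted Łukasiewicz disjunction returns a
value `≥ α` whenever some input is `≥ α`, and `≤ 1 - α` whenever all inputs are `≤ 1 - α`. -/
theorem weighted_lukasiewicz_disj_classical_constraints (n : ℕ) (w : Fin n → ℝ) (β α : ℝ)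
    (hw : ∀ i, 0 ≤ w i) (hβ : 0 ≤ β) (hα1 : 1/2 < α) (hα2 : α ≤ 1)
    (hconstr1 : ∀ i, α * w i - β + 1 ≥ α)
    (hconstr2 : (∑ i, (1 - α) * w i) - β + 1 ≤ 1 - α) :
    (∀ x : Fin n → ℝ, (∀ i, 0 ≤ x i ∧ x i ≤ 1) → (∃ j, α ≤ x j) →
      α ≤ max 0 (min 1 (1 - β + ∑ i, w i * x i))) ∧
    (∀ x : Fin n → ℝ, (∀ i, 0 ≤ x i ∧ x i ≤ 1) → (∀ i, x i ≤ 1 - α) →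
      max 0 (min 1 (1 - β + ∑ i, w i * x i)) ≤ 1 - α) :=
  weighted_lukasiewicz_disj_classical_constraints_general n w β α hw hα2 hconstr1 hconstr2
end
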